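/- Let V ⊂ P^9 be the cone over the anticanonically embedded P^1×P^1 ⊂ P^8 and let τ be the involution x ↦ -x, y_{i,j} ↦ (-1)^{i+j} y_{i,j}. Then the fixed locus of τ on V consists of the vertex P and the four points P_{0,0}, P_{0,2}, P_{2,0}, P_{2,2}; in particular τ acts freely in codimension two on V. -/
import Mathlib


open Projectivization

namespace Stmt14

/-- Index type for the homogeneous coordinates `x` (= `none`) and `y_{i,j}`
(= `some (i,j)`, `0 ≤ i, j ≤ 2`) on `P⁹`. -/
abbrev I := Option (Fin 3 × Fin 3)

/-- The affine cone over the anticanonical (bidegree `(2,2)`) embedding of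
`S = P¹×P¹` in `{x = 0} = P⁸`, together with the cone direction `x`:
a vector `w` lies in it iff its `y`-part is `y_{i,j} = u₀^i u₁^{2-i} v₀^j v₁^{2-j}`
for some `(u₀:u₁), (v₀:v₁)` (the `x`-coordinate being arbitrary). -/
def coneV : Set (I → ℂ) :=
  {w | ∃ u₀ u₁ v₀ v₁ : ℂ, ∀ i j : Fin 3,
    w (some (i, j)) = u₀ ^ (i : ℕ) * u₁ ^ (2 - (i : ℕ)) * v₀ ^ (j : ℕ) * v₁ ^ (2 - (j : ℕ))}

/-- The sign by which the involution `τ` scales each coordinate: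
`x ↦ -x`, `y_{i,j} ↦ (-1)^{i+j} y_{i,j}`. -/
def ε : I → ℂ
  | none => -1
  | some (i, j) => (-1) ^ ((i : ℕ) + (j : ℕ))

theorem ε_ne_zero : ∀ k, ε k ≠ 0 := by
  rintro (_ | ⟨i, j⟩) <;> simp [ε]

/-- The involution `τ` as a linear automorphism of `ℂ¹⁰`. -/
noncomputable def T : (I → ℂ) ≃ₗ[ℂ] (I → ℂ) :=
  LinearEquiv.piCongrRight fun k => LinearEquiv.smulOfNeZero ℂ ℂ (ε k) (ε_ne_zero k)

/-- The induced involution on `P⁹ = ℙ(ℂ¹⁰)`. -/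
noncomputable def τ : Projectivization ℂ (I → ℂ) → Projectivization ℂ (I → ℂ) :=
  Projectivization.map T.toLinearMap T.injective

/-- The cone `V ⊂ P⁹` over the anticanonically embedded `P¹×P¹`. -/
def V : Set (Projectivization ℂ (I → ℂ)) :=
  {p | ∃ (w : I → ℂ) (hw : w ≠ 0), w ∈ coneV ∧ p = Projectivization.mk ℂ w hw}

theorem single_ne_zero (k : I) : (Pi.single k 1 : I → ℂ) ≠ 0 := by
  intro h
  simpa using congrFun h k

/-- The vertex `P = (0 : ⋯ : 0 : 1)` of the cone. -/
noncomputable def vertex : Projectivization ℂ (I → ℂ) :=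
  Projectivization.mk ℂ (Pi.single none 1) (single_ne_zero none)

/-- The coordinate point `P_{i,j}` (only `y_{i,j} ≠ 0`). -/
noncomputable def Pt (i j : Fin 3) : Projectivization ℂ (I → ℂ) :=
  Projectivization.mk ℂ (Pi.single (some (i, j)) 1) (single_ne_zero (some (i, j)))

lemma T_apply (w : I → ℂ) (k : I) : T.toLinearMap w k = ε k * w k := rfl

lemma fixed_iff (w : I → ℂ) (hw : w ≠ 0) :
    τ (Projectivization.mk ℂ w hw) = Projectivization.mk ℂ w hw ↔
      ∃ a : ℂ, ∀ k, a * w k = ε k * w k := by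
  rw [τ, Projectivization.map_mk, Projectivization.mk_eq_mk_iff']
  constructor
  · rintro ⟨a, ha⟩
    exact ⟨a, fun k => by rw [← T_apply, ← ha]; simp⟩
  · rintro ⟨a, ha⟩
    exact ⟨a, funext fun k => by simp [T_apply w k, ha k]⟩

lemma mk_eq_single {w : I → ℂ} (hw : w ≠ 0) (k : I) (h0 : ∀ m, m ≠ k → w m = 0) :
    Projectivization.mk ℂ w hw = Projectivization.mk ℂ (Pi.single k 1) (single_ne_zero k) := by
  rw [Projectivization.mk_eq_mk_iff']
  refine ⟨w k, funext fun m => ?_⟩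
  by_cases hm : m = k
  · subst hm; simp
  · simp [Pi.single_apply, hm, h0 m hm]

lemma vertex_mem : vertex ∈ V ∧ τ vertex = vertex := by
  constructor
  · refine ⟨Pi.single none 1, single_ne_zero none, ⟨0, 0, 0, 0, fun i j => ?_⟩, rfl⟩
    rw [Pi.single_eq_of_ne (by simp)]
    fin_cases i <;> fin_cases j <;> norm_num
  · rw [vertex, fixed_iff]
    refine ⟨-1, fun k => ?_⟩
    rcases k with _ | ⟨i, j⟩
    · simp [ε]
    · rw [Pi.single_eq_of_ne (by simp)]; ring

lemma corner_mem (i j : Fin 3) (u0 u1 v0 v1 : ℂ)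
    (h : ∀ i' j' : Fin 3, (Pi.single (some (i, j)) 1 : I → ℂ) (some (i', j')) =
      u0 ^ (i' : ℕ) * u1 ^ (2 - (i' : ℕ)) * v0 ^ (j' : ℕ) * v1 ^ (2 - (j' : ℕ)))
    (hε : ε (some (i, j)) = 1) : Pt i j ∈ V ∧ τ (Pt i j) = Pt i j := by
  constructor
  · exact ⟨_, single_ne_zero _, ⟨u0, u1, v0, v1, h⟩, rfl⟩
  · rw [Pt, fixed_iff]
    refine ⟨1, fun k => ?_⟩
    by_cases hk : k = some (i, j)
    · subst hk; rw [hε]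
    · rw [Pi.single_eq_of_ne hk]; ring

/-- the fixed locus of `τ` on `V` consists of the vertex `P` and the four
points `P_{0,0}, P_{0,2}, P_{2,0}, P_{2,2}`; in particular `τ` acts freely in
codimension two on `V`. -/
theorem stmt_14 :
    {p ∈ V | τ p = p} = {vertex, Pt 0 0, Pt 0 2, Pt 2 0, Pt 2 2} := by
  ext p
  simp only [Set.mem_setOf_eq, Set.mem_insert_iff, Set.mem_singleton_iff]
  constructor
  · rintro ⟨⟨w, hw, ⟨u0, u1, v0, v1, E⟩, rfl⟩, hfix⟩
    rw [fixed_iff] at hfix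
    obtain ⟨a, ha⟩ := hfix
    obtain ⟨k0, hk0⟩ : ∃ k, w k ≠ 0 := by
      by_contra h; push_neg at h; exact hw (funext fun k => h k)
    have ha1 : a = 1 ∨ a = -1 := by
      have haval : a = ε k0 := mul_right_cancel₀ hk0 (ha k0)
      rw [haval]
      rcases k0 with _ | ⟨i, j⟩
      · right; rfl
      · rcases Nat.even_or_odd ((i : ℕ) + (j : ℕ)) with he | ho
        · left; exact he.neg_one_pow
        · right; exact ho.neg_one_pow
    have E00 : w (some (0, 0)) = u1 ^ 2 * v1 ^ 2 := by
      have := E 0 0; norm_num at this; linear_combination this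
    have E01 : w (some (0, 1)) = u1 ^ 2 * (v0 * v1) := by
      have := E 0 1; norm_num at this; linear_combination this
    have E02 : w (some (0, 2)) = u1 ^ 2 * v0 ^ 2 := by
      have := E 0 2; norm_num at this; linear_combination this
    have E10 : w (some (1, 0)) = u0 * u1 * v1 ^ 2 := by
      have := E 1 0; norm_num at this; linear_combination this
    have E12 : w (some (1, 2)) = u0 * u1 * v0 ^ 2 := by
      have := E 1 2; norm_num at this; linear_combination this
    have E20 : w (some (2, 0)) = u0 ^ 2 * v1 ^ 2 := by
      have := E 2 0; norm_num at this; linear_combination this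
    have E21 : w (some (2, 1)) = u0 ^ 2 * (v0 * v1) := by
      have := E 2 1; norm_num at this; linear_combination this
    have E22 : w (some (2, 2)) = u0 ^ 2 * v0 ^ 2 := by
      have := E 2 2; norm_num at this; linear_combination this
    rcases ha1 with rfl | rfl
    · -- a = 1 : the four corner points
      have hx : w none = 0 := by
        have h := ha none
        rw [show ε none = -1 from rfl] at h
        have h2 : (2 : ℂ) * w none = 0 := by linear_combination h
        exact (mul_eq_zero.mp h2).resolve_left two_ne_zero
      have z01 : u1 ^ 2 * (v0 * v1) = 0 := by
        have h := ha (some (0, 1))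
        rw [show ε (some (0, 1)) = -1 by norm_num [ε], E01] at h
        have h2 : (2 : ℂ) * (u1 ^ 2 * (v0 * v1)) = 0 := by linear_combination h
        exact (mul_eq_zero.mp h2).resolve_left two_ne_zero
      have z21 : u0 ^ 2 * (v0 * v1) = 0 := by
        have h := ha (some (2, 1))
        rw [show ε (some (2, 1)) = -1 by norm_num [ε], E21] at h
        have h2 : (2 : ℂ) * (u0 ^ 2 * (v0 * v1)) = 0 := by linear_combination h
        exact (mul_eq_zero.mp h2).resolve_left two_ne_zero
      have z10 : u0 * u1 * v1 ^ 2 = 0 := by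
        have h := ha (some (1, 0))
        rw [show ε (some (1, 0)) = -1 by norm_num [ε], E10] at h
        have h2 : (2 : ℂ) * (u0 * u1 * v1 ^ 2) = 0 := by linear_combination h
        exact (mul_eq_zero.mp h2).resolve_left two_ne_zero
      have z12 : u0 * u1 * v0 ^ 2 = 0 := by
        have h := ha (some (1, 2))
        rw [show ε (some (1, 2)) = -1 by norm_num [ε], E12] at h
        have h2 : (2 : ℂ) * (u0 * u1 * v0 ^ 2) = 0 := by linear_combination h
        exact (mul_eq_zero.mp h2).resolve_left two_ne_zero
      have hWne : ¬ (u0 = 0 ∧ u1 = 0) ∧ ¬ (v0 = 0 ∧ v1 = 0) := by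
        constructor
        · rintro ⟨rfl, rfl⟩
          apply hw
          funext m
          rcases m with _ | ⟨i, j⟩
          · exact hx
          · rw [E i j]; fin_cases i <;> norm_num
        · rintro ⟨rfl, rfl⟩
          apply hw
          funext m
          rcases m with _ | ⟨i, j⟩
          · exact hx
          · rw [E i j]; fin_cases j <;> norm_num
      have hv : v0 * v1 = 0 := by
        by_contra hvv
        exact hWne.1
          ⟨pow_eq_zero_iff (n := 2) (by norm_num) |>.mp
            ((mul_eq_zero.mp z21).resolve_right hvv),
           pow_eq_zero_iff (n := 2) (by norm_num) |>.mp
            ((mul_eq_zero.mp z01).resolve_right hvv)⟩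
      have hu : u0 * u1 = 0 := by
        by_contra huu
        exact hWne.2
          ⟨pow_eq_zero_iff (n := 2) (by norm_num) |>.mp
            ((mul_eq_zero.mp z12).resolve_left huu),
           pow_eq_zero_iff (n := 2) (by norm_num) |>.mp
            ((mul_eq_zero.mp z10).resolve_left huu)⟩
      rcases mul_eq_zero.mp hu with hu0 | hu1 <;> rcases mul_eq_zero.mp hv with hv0 | hv1
      · -- u0 = 0, v0 = 0 : Pt 0 0
        right; left
        subst hu0; subst hv0
        exact mk_eq_single hw (some (0, 0)) (by
          rintro (_ | ⟨i, j⟩) hm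
          · exact hx
          · rw [E i j]
            fin_cases i <;> fin_cases j <;> first | exact absurd rfl hm | norm_num)
      · -- u0 = 0, v1 = 0 : Pt 0 2
        right; right; left
        subst hu0; subst hv1
        exact mk_eq_single hw (some (0, 2)) (by
          rintro (_ | ⟨i, j⟩) hm
          · exact hx
          · rw [E i j]
            fin_cases i <;> fin_cases j <;> first | exact absurd rfl hm | norm_num)
      · -- u1 = 0, v0 = 0 : Pt 2 0
        right; right; right; left
        subst hu1; subst hv0
        exact mk_eq_single hw (some (2, 0)) (by
          rintro (_ | ⟨i, j⟩) hm
          · exact hx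
          · rw [E i j]
            fin_cases i <;> fin_cases j <;> first | exact absurd rfl hm | norm_num)
      · -- u1 = 0, v1 = 0 : Pt 2 2
        right; right; right; right
        subst hu1; subst hv1
        exact mk_eq_single hw (some (2, 2)) (by
          rintro (_ | ⟨i, j⟩) hm
          · exact hx
          · rw [E i j]
            fin_cases i <;> fin_cases j <;> first | exact absurd rfl hm | norm_num)
    · -- a = -1 : the vertex
      have c00 : u1 ^ 2 * v1 ^ 2 = 0 := by
        have h := ha (some (0, 0))
        rw [show ε (some (0, 0)) = 1 by norm_num [ε], E00] at h
        have h2 : (2 : ℂ) * (u1 ^ 2 * v1 ^ 2) = 0 := by linear_combination -h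
        exact (mul_eq_zero.mp h2).resolve_left two_ne_zero
      have c02 : u1 ^ 2 * v0 ^ 2 = 0 := by
        have h := ha (some (0, 2))
        rw [show ε (some (0, 2)) = 1 by norm_num [ε], E02] at h
        have h2 : (2 : ℂ) * (u1 ^ 2 * v0 ^ 2) = 0 := by linear_combination -h
        exact (mul_eq_zero.mp h2).resolve_left two_ne_zero
      have c20 : u0 ^ 2 * v1 ^ 2 = 0 := by
        have h := ha (some (2, 0))
        rw [show ε (some (2, 0)) = 1 by norm_num [ε], E20] at h
        have h2 : (2 : ℂ) * (u0 ^ 2 * v1 ^ 2) = 0 := by linear_combination -h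
        exact (mul_eq_zero.mp h2).resolve_left two_ne_zero
      have c22 : u0 ^ 2 * v0 ^ 2 = 0 := by
        have h := ha (some (2, 2))
        rw [show ε (some (2, 2)) = 1 by norm_num [ε], E22] at h
        have h2 : (2 : ℂ) * (u0 ^ 2 * v0 ^ 2) = 0 := by linear_combination -h
        exact (mul_eq_zero.mp h2).resolve_left two_ne_zero
      have p11 : u1 * v1 = 0 :=
        pow_eq_zero_iff (n := 2) (by norm_num) |>.mp (by linear_combination c00)
      have p10 : u1 * v0 = 0 :=
        pow_eq_zero_iff (n := 2) (by norm_num) |>.mp (by linear_combination c02)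
      have p01 : u0 * v1 = 0 :=
        pow_eq_zero_iff (n := 2) (by norm_num) |>.mp (by linear_combination c20)
      have p00 : u0 * v0 = 0 :=
        pow_eq_zero_iff (n := 2) (by norm_num) |>.mp (by linear_combination c22)
      left
      refine mk_eq_single hw none ?_
      rintro (_ | ⟨i, j⟩) hm
      · exact absurd rfl hm
      · rw [E i j]
        simp only [mul_eq_zero] at p11 p10 p01 p00
        fin_cases i <;> fin_cases j <;> norm_num <;> tauto
  · rintro (rfl | rfl | rfl | rfl | rfl)
    · exact ⟨vertex_mem.1, vertex_mem.2⟩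
    · exact corner_mem 0 0 0 1 0 1
        (by intro i' j'; fin_cases i' <;> fin_cases j' <;> simp [Pi.single_apply])
        (by norm_num [ε])
    · exact corner_mem 0 2 0 1 1 0
        (by intro i' j'; fin_cases i' <;> fin_cases j' <;> simp [Pi.single_apply])
        (by norm_num [ε])
    · exact corner_mem 2 0 1 0 0 1
        (by intro i' j'; fin_cases i' <;> fin_cases j' <;> simp [Pi.single_apply])
        (by norm_num [ε])
    · exact corner_mem 2 2 1 0 1 0
        (by intro i' j'; fin_cases i' <;> fin_cases j' <;> simp [Pi.single_apply])
        (by norm_num [ε])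

end Stmt14
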